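/- arXiv:2511.04952 — 4 statements merged into one kernel-verified Lean document; each statement's English description precedes it below -/
import Mathlib

section
/- Suppose F(S) is nonempty with first token t, so that S = t ++ Q. Then for every prefix Q' of Q, the tokenization F(t ++ Q') is nonempty and its first token is also t. (In the paper's wording: if the first token generated during the tokenization of S is t, and S' is a contiguous substring of S whose span contains the span of t, then the first token generated during the tokenization of S' is also t.) -/
variable {α : Type*} [DecidableEq α]

/-- The longest nonempty prefix of `S` belonging to the vocabulary `V`
(falling back to the first character of `S` if no such prefix exists). -/
noncomputable def firstTok (V : Finset (List α)) (S : List α) : List α :=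
  ((V.filter (fun w => w ≠ [] ∧ w <+: S)).toList.argmax List.length).getD (S.take 1)

lemma firstTok_ne_nil (V : Finset (List α)) (a : α) (s : List α) :
    firstTok V (a :: s) ≠ [] := by
  unfold firstTok
  cases h : ((V.filter (fun w => w ≠ [] ∧ w <+: (a :: s))).toList.argmax List.length) with
  | none => simp
  | some w =>
    have hw : w ∈ (V.filter (fun w => w ≠ [] ∧ w <+: (a :: s))).toList :=
      List.argmax_mem h
    rw [Finset.mem_toList, Finset.mem_filter] at hw
    simpa using hw.2.1

/-- Greedy (WordPiece-style) tokenization with vocabulary `V`. -/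
noncomputable def F (V : Finset (List α)) : List α → List (List α)
  | [] => []
  | a :: s =>
    firstTok V (a :: s) :: F V ((a :: s).drop (firstTok V (a :: s)).length)
termination_by S => S.length
decreasing_by
  have h := firstTok_ne_nil V a s
  have hpos : 0 < (firstTok V (a :: s)).length := List.length_pos_iff.mpr h
  simp only [List.length_drop, List.length_cons]
  omega

/-! Every nonempty vocabulary prefix of `t ++ Q'` is also a prefix of `S`, hence no longer than `t`,
the longest vocabulary prefix of `S`; so `t` is still the longest vocabulary prefix of `t ++ Q'`. -/

def vocabPrefixes (V : Finset (List α)) (S : List α) : Finset (List α) :=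
  V.filter (fun w => w ≠ [] ∧ w <+: S)

theorem mem_vocabPrefixes {V : Finset (List α)} {S w : List α} :
    w ∈ (vocabPrefixes V S).toList ↔ w ∈ V ∧ w ≠ [] ∧ w <+: S := by
  simp [vocabPrefixes]

theorem firstTok_eq_getD_argmax (V : Finset (List α)) (S : List α) :
    firstTok V S = ((vocabPrefixes V S).toList.argmax List.length).getD (S.take 1) := rfl

structure IsLongestPrefixIn (V : Finset (List α)) (S t : List α) : Prop where
  mem : t ∈ V
  ne_nil : t ≠ []
  isPrefix : t <+: S
  longest : ∀ w ∈ V, w ≠ [] → w <+: S → w.length ≤ t.length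

theorem IsLongestPrefixIn.of_prefix {α : Type*} {V : Finset (List α)} {S S' t : List α}
    (h : IsLongestPrefixIn V S t) (ht : t <+: S') (hS' : S' <+: S) :
    IsLongestPrefixIn V S' t :=
  ⟨h.mem, h.ne_nil, ht, fun w hw hw₀ hwS' => h.longest w hw hw₀ (hwS'.trans hS')⟩

theorem IsLongestPrefixIn.firstTok_eq {V : Finset (List α)} {S t : List α}
    (h : IsLongestPrefixIn V S t) : firstTok V S = t := by
  have ht : t ∈ (vocabPrefixes V S).toList := mem_vocabPrefixes.2 ⟨h.mem, h.ne_nil, h.isPrefix⟩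
  obtain ⟨m, hm⟩ := Option.ne_none_iff_exists'.1 <|
    mt (List.argmax_eq_none (f := List.length)).1 (List.ne_nil_of_mem ht)
  obtain ⟨hmV, hm₀, hmS⟩ := mem_vocabPrefixes.1 (List.argmax_mem hm)
  have hlen : m.length = t.length :=
    le_antisymm (h.longest m hmV hm₀ hmS) (List.le_of_mem_argmax ht hm)
  rw [firstTok_eq_getD_argmax, hm, Option.getD_some]
  exact (List.prefix_of_prefix_length_le hmS h.isPrefix hlen.le).eq_of_length hlen

theorem isLongestPrefixIn_firstTok {V : Finset (List α)} (hsingle : ∀ a : α, [a] ∈ V)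
    (a : α) (s : List α) : IsLongestPrefixIn V (a :: s) (firstTok V (a :: s)) := by
  have hmem : ∀ {w}, w ∈ V → w ≠ [] → w <+: a :: s → w ∈ (vocabPrefixes V (a :: s)).toList :=
    fun hw hw₀ hwS => mem_vocabPrefixes.2 ⟨hw, hw₀, hwS⟩
  rw [firstTok_eq_getD_argmax]
  cases hm : (vocabPrefixes V (a :: s)).toList.argmax List.length with
  | none =>
    refine ⟨hsingle a, List.cons_ne_nil a [], by simp, fun w hw hw₀ hwS => ?_⟩
    simpa [(List.argmax_eq_none (f := List.length)).1 hm] using hmem hw hw₀ hwS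
  | some m =>
    obtain ⟨hmV, hm₀, hmS⟩ := mem_vocabPrefixes.1 (List.argmax_mem hm)
    exact ⟨hmV, hm₀, hmS, fun w hw hw₀ hwS => List.le_of_mem_argmax (hmem hw hw₀ hwS) hm⟩

theorem head?_F_cons (V : Finset (List α)) (a : α) (s : List α) :
    (F V (a :: s)).head? = some (firstTok V (a :: s)) := by
  rw [F.eq_2, List.head?_cons]

theorem first_token_stable_general (V : Finset (List α))
    (hsingle : ∀ a : α, [a] ∈ V)
    (S t Q : List α) (hS : S = t ++ Q) (hhead : (F V S).head? = some t) :
    ∀ Q' : List α, Q' <+: Q → (F V (t ++ Q')).head? = some t := by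
  intro Q' hQ'
  obtain _ | ⟨a, s⟩ := S
  · simp [F.eq_1] at hhead
  rw [head?_F_cons, Option.some_inj] at hhead
  have ht : IsLongestPrefixIn V (a :: s) t := hhead ▸ isLongestPrefixIn_firstTok hsingle a s
  have ht' : IsLongestPrefixIn V (t ++ Q') t :=
    ht.of_prefix (List.prefix_append t Q') (hS ▸ (List.prefix_append_right_inj t).2 hQ')
  obtain ⟨b, u, hbu⟩ := List.exists_cons_of_ne_nil (List.append_ne_nil_of_left_ne_nil ht.ne_nil Q')
  rw [hbu, head?_F_cons, ← hbu, ht'.firstTok_eq]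

/-- if the first token of `F V S` is `t`, with `S = t ++ Q`,
then for every prefix `Q'` of `Q`, the tokenization of `t ++ Q'` is nonempty
and its first token is also `t`. -/
theorem first_token_stable (V : Finset (List α))
    (hne : ∀ w ∈ V, w ≠ []) (hsingle : ∀ a : α, [a] ∈ V)
    (S t Q : List α) (hS : S = t ++ Q) (hhead : (F V S).head? = some t) :
    ∀ Q' : List α, Q' <+: Q → (F V (t ++ Q')).head? = some t :=
  first_token_stable_general V hsingle S t Q hS hhead
end

section
/- If the tokenization of a string S decomposes as F(S) = A ++ B ++ C (a concatenation of three lists of tokens), then F(join B) = B. Equivalently, if F(S) = [t_1, …, t_n], then for all indices 1 ≤ l ≤ r ≤ n, tokenizing the concatenated substring t_l ++ t_{l+1} ++ … ++ t_r yields exactly the token list [t_l, t_{l+1}, …, t_r]. -/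
variable {α : Type*} [DecidableEq α]

/-! Because of its fallback, `firstTok V S` is the longest nonempty prefix of `S` that lies in `V`
or has length one. Such greedy choices survive cutting the string: if the greedy token of `X ++ Y`
is a prefix of `X`, then it and the greedy token of `X` are each a candidate for the other's place,
so they coincide. A suffix of a tokenization is the tokenization of its own concatenation because
`F` recurses on the rest of the string; cutting token by token gives the same for a prefix, and a
middle block is a prefix of a suffix. -/

structure IsGreedyPrefix {β : Type*} (V : Finset (List β)) (S w : List β) : Prop where
  ne_nil : w ≠ []
  isPrefix : w <+: S
  mem_or_length_eq_one : w ∈ V ∨ w.length = 1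
  length_le : ∀ u ∈ V, u ≠ [] → u <+: S → u.length ≤ w.length

lemma isGreedyPrefix_firstTok (V : Finset (List α)) {S : List α} (hS : S ≠ []) :
    IsGreedyPrefix V S (firstTok V S) := by
  obtain ⟨a, s, rfl⟩ := List.exists_cons_of_ne_nil hS
  set cands := (V.filter (fun w => w ≠ [] ∧ w <+: a :: s)).toList with hcands
  have hmem {u : List α} : u ∈ cands ↔ u ∈ V ∧ u ≠ [] ∧ u <+: a :: s := by
    rw [hcands, Finset.mem_toList, Finset.mem_filter]
  cases hmax : cands.argmax List.length with
  | none =>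
    have hft : firstTok V (a :: s) = [a] := by
      unfold firstTok; rw [← hcands, hmax]; rfl
    rw [List.argmax_eq_none] at hmax
    rw [hft]
    refine ⟨List.cons_ne_nil a [], by simp, Or.inr rfl, fun u hu hune hupre => ?_⟩
    simpa [hmax] using hmem.mpr ⟨hu, hune, hupre⟩
  | some m =>
    have hft : firstTok V (a :: s) = m := by
      unfold firstTok; rw [← hcands, hmax]; rfl
    obtain ⟨hmV, hmne, hmpre⟩ := hmem.mp (List.argmax_mem hmax)
    rw [hft]
    exact ⟨hmne, hmpre, Or.inl hmV, fun u hu hune hupre =>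
      List.le_of_mem_argmax (hmem.mpr ⟨hu, hune, hupre⟩) hmax⟩

lemma IsGreedyPrefix.length_le_of_prefix {β : Type*} {V : Finset (List β)} {S S' w w' : List β}
    (hw : IsGreedyPrefix V S w) (hw' : IsGreedyPrefix V S' w') (h : w <+: S') :
    w.length ≤ w'.length := by
  rcases hw.mem_or_length_eq_one with hwV | hw1
  · exact hw'.length_le w hwV hw.ne_nil h
  · rw [hw1, Nat.one_le_iff_ne_zero, Ne, List.length_eq_zero_iff]
    exact hw'.ne_nil

lemma firstTok_eq_of_prefix (V : Finset (List α)) {X Y : List α} (hX : X ≠ [])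
    (h : firstTok V (X ++ Y) <+: X) : firstTok V X = firstTok V (X ++ Y) := by
  have hgX := isGreedyPrefix_firstTok V hX
  have hgXY := isGreedyPrefix_firstTok V (List.append_ne_nil_of_left_ne_nil hX Y)
  have hpre : firstTok V X <+: X ++ Y := hgX.isPrefix.trans (List.prefix_append X Y)
  have hle := hgX.length_le_of_prefix hgXY hpre
  exact (List.prefix_of_prefix_length_le hpre hgXY.isPrefix hle).eq_of_length
    (le_antisymm hle (hgXY.length_le_of_prefix hgX h))

lemma F_of_ne_nil (V : Finset (List α)) {S : List α} (hS : S ≠ []) :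
    F V S = firstTok V S :: F V (S.drop (firstTok V S).length) := by
  obtain ⟨a, s, rfl⟩ := List.exists_cons_of_ne_nil hS
  rw [F]

lemma flatten_F (V : Finset (List α)) (S : List α) : (F V S).flatten = S := by
  induction S using F.induct V with
  | case1 => simp [F]
  | case2 a s ih =>
    rw [F, List.flatten_cons, ih]
    exact List.prefix_iff_eq_append.mp (isGreedyPrefix_firstTok V (List.cons_ne_nil a s)).isPrefix

lemma F_flatten_of_F_eq_append (V : Finset (List α)) {S : List α} {A R : List (List α)}
    (h : F V S = A ++ R) : F V R.flatten = R := by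
  induction A generalizing S with
  | nil => rw [← List.nil_append R, ← h, flatten_F]
  | cons t A ih =>
    have hS : S ≠ [] := by
      rintro rfl
      simp [F] at h
    rw [F_of_ne_nil V hS, List.cons_append, List.cons.injEq] at h
    exact ih h.2

lemma F_flatten_of_F_flatten_append_eq (V : Finset (List α)) {B C : List (List α)}
    {Y : List α} (h : F V (B.flatten ++ Y) = B ++ C) : F V B.flatten = B := by
  induction B with
  | nil => simp [F]
  | cons b B ih =>
    rw [List.flatten_cons, List.append_assoc] at h
    rw [List.flatten_cons]
    have hne : b ++ (B.flatten ++ Y) ≠ [] := by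
      intro h0
      simp [h0, F] at h
    rw [F_of_ne_nil V hne, List.cons_append, List.cons.injEq] at h
    obtain ⟨hb, htail⟩ := h
    have hbne : b ≠ [] := hb ▸ (isGreedyPrefix_firstTok V hne).ne_nil
    have hX : b ++ B.flatten ≠ [] := List.append_ne_nil_of_left_ne_nil hbne _
    have hfirst : firstTok V (b ++ B.flatten) = b := by
      have hcut := firstTok_eq_of_prefix V (Y := Y) hX
        (by rw [List.append_assoc, hb]; exact List.prefix_append _ _)
      rwa [List.append_assoc, hb] at hcut
    rw [hb, List.drop_left] at htail
    rw [F_of_ne_nil V hX, hfirst, List.drop_left, ih htail]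

theorem tokenize_middle_block_general (V : Finset (List α))
    (S : List α) (A B C : List (List α)) (h : F V S = A ++ B ++ C) :
    F V B.flatten = B := by
  have hBC : F V (B ++ C).flatten = B ++ C :=
    F_flatten_of_F_eq_append V (h.trans (List.append_assoc A B C))
  rw [List.flatten_append] at hBC
  exact F_flatten_of_F_flatten_append_eq V hBC

/-- if `F V S` decomposes as `A ++ B ++ C`, then tokenizing the
concatenation of the middle block of tokens reproduces exactly that block. -/
theorem tokenize_middle_block (V : Finset (List α))
    (hne : ∀ w ∈ V, w ≠ []) (hsingle : ∀ a : α, [a] ∈ V)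
    (S : List α) (A B C : List (List α)) (h : F V S = A ++ B ++ C) :
    F V B.flatten = B :=
  tokenize_middle_block_general V S A B C h
end

section
/- Let L, M, R be strings such that F(L ++ M) = F(L) ++ F(M) and the length of M is at least T (the maximum length of a vocabulary word). Then F(L ++ M ++ R) = F(L) ++ F(M ++ R); that is, the token boundary at the end of L persists no matter what string R is appended after M. -/
variable {α : Type*} [DecidableEq α]

/-! Once `M` is at least as long as every vocabulary word, no token that starts inside `L` can
see past `M`, so appending `R` changes none of the greedy choices made in `L`. Inducting along
the tokens of `L`, each first token of `L ++ M ++ R` is that of `L ++ M`, and it is a token of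
`L` because the boundary after `L` is respected. -/

lemma F_nil (V : Finset (List α)) : F V [] = [] := by
  rw [F]

lemma firstTok_length_le (V : Finset (List α)) (S : List α) :
    (firstTok V S).length ≤ S.length := by
  unfold firstTok
  cases h : (V.filter (fun w => w ≠ [] ∧ w <+: S)).toList.argmax List.length with
  | none => simp
  | some w =>
    have hw := List.argmax_mem h
    rw [Finset.mem_toList, Finset.mem_filter] at hw
    simpa using hw.2.2.length_le

lemma firstTok_append_of_sup_le (V : Finset (List α)) {S : List α} (R : List α) (hS : S ≠ [])
    (hlen : V.sup List.length ≤ S.length) :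
    firstTok V (S ++ R) = firstTok V S := by
  have hcandidates : V.filter (fun w => w ≠ [] ∧ w <+: S ++ R)
      = V.filter (fun w => w ≠ [] ∧ w <+: S) := by
    refine Finset.filter_congr fun w hw => and_congr_right fun _ => ⟨fun hpre => ?_, ?_⟩
    · exact List.prefix_of_prefix_length_le hpre (S.prefix_append R)
        ((Finset.le_sup hw).trans hlen)
    · exact fun hpre => hpre.trans (S.prefix_append R)
  have hfallback : (S ++ R).take 1 = S.take 1 := by
    obtain ⟨a, s, rfl⟩ := List.exists_cons_of_ne_nil hS
    rfl
  unfold firstTok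
  rw [hcandidates, hfallback]

theorem F_append_append_of_sup_le (V : Finset (List α)) {M : List α} (R : List α)
    (hM : V.sup List.length ≤ M.length) (L : List α) (h : F V (L ++ M) = F V L ++ F V M) :
    F V (L ++ M ++ R) = F V L ++ F V (M ++ R) := by
  induction L using F.induct V with
  | case1 => simp [F_nil]
  | case2 a s ih =>
    have hL : a :: s ≠ [] := List.cons_ne_nil a s
    generalize a :: s = L at ih hL h ⊢
    set t := firstTok V L
    have hLM : L ++ M ≠ [] := List.append_ne_nil_of_left_ne_nil hL M
    have hdrop (X : List α) : (L ++ X).drop t.length = L.drop t.length ++ X :=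
      List.drop_append_of_le_length (firstTok_length_le V L)
    rw [F_of_ne_nil V hLM, F_of_ne_nil V hL, List.cons_append, List.cons_eq_cons] at h
    obtain ⟨htok, hrest⟩ := h
    rw [htok, hdrop] at hrest
    have htok' : firstTok V (L ++ M ++ R) = t := by
      rw [firstTok_append_of_sup_le V R hLM (hM.trans (by simp)), htok]
    rw [F_of_ne_nil V (List.append_ne_nil_of_left_ne_nil hLM R), htok', List.append_assoc,
      hdrop, ← List.append_assoc, ih hrest, F_of_ne_nil V hL, List.cons_append]

theorem boundary_persists_general (V : Finset (List α))
    (T : ℕ) (hT : T = V.sup List.length)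
    (L M R : List α)
    (h1 : F V (L ++ M) = F V L ++ F V M)
    (hM : T ≤ M.length) :
    F V (L ++ M ++ R) = F V L ++ F V (M ++ R) :=
  F_append_append_of_sup_le V R (hT ▸ hM) L h1

/-- if the token boundary between `L` and `M` is respected
(`F (L ++ M) = F L ++ F M`) and `M` has length at least `T` (the maximal
length of a vocabulary word), then this boundary persists after appending any
string `R`. -/
theorem boundary_persists (V : Finset (List α))
    (hne : ∀ w ∈ V, w ≠ []) (hsingle : ∀ a : α, [a] ∈ V)
    (T : ℕ) (hT : T = V.sup List.length)
    (L M R : List α)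
    (h1 : F V (L ++ M) = F V L ++ F V M)
    (hM : T ≤ M.length) :
    F V (L ++ M ++ R) = F V L ++ F V (M ++ R) :=
  boundary_persists_general V T hT L M R h1 hM
end

section
/- (Two-chunk lossless parallel tokenization.) Let S = S1 ++ So ++ S2, where So is the overlapped part. Write F(S1 ++ So) = [a_1, …, a_m] and F(So ++ S2) = [b_1, …, b_n]. Suppose there exist indices i1, i2 and an integer k ≥ 0 with i1 + k ≤ m and i2 + k ≤ n such that for every 0 ≤ j ≤ k: (i) a_{i1+j} = b_{i2+j}, and (ii) the spans agree in S, i.e. the global start position of a_{i1+j}, namely |a_1| + … + |a_{i1+j−1}|, equals the global start position of b_{i2+j}, namely |S1| + |b_1| + … + |b_{i2+j−1}|. Suppose moreover the matched run is long: |a_{i1}| + |a_{i1+1}| + … + |a_{i1+k}| > T. Then F(S) = [a_1, …, a_{i1+k}] ++ [b_{i2+k+1}, …, b_n]; that is, keeping the left chunk's tokens through the end of the matched run and the right chunk's tokens after the matched run reproduces exactly the tokenization of the full string S. -/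
/-! Greedy tokenization looks at most `T` characters ahead, so at a token boundary of the left
chunk `S1 ++ So` that is followed by at least `T` characters of that chunk, the tokens of the
chunk before the boundary are also the first tokens of `S`, and the rest of `S` is tokenized as
the suffix starting there. The first token of the matched run is such a boundary: the run is
longer than `T`, and since its start is also a token boundary of the right chunk `So ++ S2` at the
same position of `S`, the suffix of `S` from there is tokenized as the right chunk's tokens from
`b_{i2}` on. Because the run is shared by both chunks, the cut can then be moved to its end. -/

variable {α : Type*} [DecidableEq α]

lemma firstTok_prefix (V : Finset (List α)) (S : List α) : firstTok V S <+: S := by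
  unfold firstTok
  cases h : (V.filter (fun w => w ≠ [] ∧ w <+: S)).toList.argmax List.length with
  | none => exact List.take_prefix 1 S
  | some w =>
    have hw := List.argmax_mem h
    rw [Finset.mem_toList, Finset.mem_filter] at hw
    exact hw.2.2

lemma firstTok_append_of_forall_length_le (V : Finset (List α)) {Z : List α} (Y : List α)
    (hZ : Z ≠ []) (hV : ∀ w ∈ V, w.length ≤ Z.length) :
    firstTok V (Z ++ Y) = firstTok V Z := by
  have hfilter :
      V.filter (fun w => w ≠ [] ∧ w <+: Z ++ Y) = V.filter (fun w => w ≠ [] ∧ w <+: Z) := by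
    refine Finset.filter_congr fun w hw => and_congr_right fun _ => ?_
    rw [List.prefix_iff_eq_take, List.prefix_iff_eq_take, List.take_append_of_le_length (hV w hw)]
  obtain ⟨a, s, rfl⟩ := List.exists_cons_of_ne_nil hZ
  unfold firstTok
  rw [hfilter, List.cons_append, List.take_succ_cons, List.take_succ_cons, List.take_zero,
    List.take_zero]

lemma sum_map_length_F (V : Finset (List α)) (S : List α) :
    ((F V S).map List.length).sum = S.length := by
  rw [← List.length_flatten, flatten_F]

lemma F_drop_sum_map_length_take (V : Finset (List α)) (i : ℕ) (S : List α) :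
    F V (S.drop (((F V S).take i).map List.length).sum) = (F V S).drop i := by
  induction i generalizing S with
  | zero => simp
  | succ i ih =>
    cases S with
    | nil => simp [F.eq_1]
    | cons a s =>
      rw [F.eq_2, List.take_succ_cons, List.map_cons, List.sum_cons, List.drop_succ_cons,
        ← List.drop_drop, ih]

lemma F_append_of_forall_length_le (V : Finset (List α)) {Z : List α} (Y : List α)
    (hZ : Z ≠ []) (hV : ∀ w ∈ V, w.length ≤ Z.length) :
    F V (Z ++ Y) = firstTok V Z :: F V (Z.drop (firstTok V Z).length ++ Y) := by
  obtain ⟨a, s, rfl⟩ := List.exists_cons_of_ne_nil hZ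
  rw [List.cons_append, F.eq_2, ← List.cons_append,
    firstTok_append_of_forall_length_le V Y hZ hV,
    List.drop_append_of_le_length (firstTok_prefix V _).length_le]

lemma F_append_eq_take_append (V : Finset (List α)) {T : ℕ} (hV : ∀ w ∈ V, w.length ≤ T)
    (i : ℕ) (Z Y : List α) (h : (((F V Z).take i).map List.length).sum + T ≤ Z.length) :
    F V (Z ++ Y) = (F V Z).take i
      ++ F V (Z.drop (((F V Z).take i).map List.length).sum ++ Y) := by
  induction i generalizing Z with
  | zero => simp
  | succ i ih =>
    cases Z with
    | nil => simp [F.eq_1]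
    | cons a s =>
      rw [F.eq_2] at h ⊢
      rw [List.take_succ_cons, List.map_cons, List.sum_cons] at h ⊢
      have hlen := (firstTok_prefix V (a :: s)).length_le
      rw [F_append_of_forall_length_le V Y (List.cons_ne_nil a s)
          fun w hw => (hV w hw).trans (by omega),
        ih _ (by rw [List.length_drop]; omega), List.drop_drop, List.cons_append]

lemma take_append_drop_eq_of_getElem_eq {β : Type*} {l₁ l₂ : List β} {i₁ i₂ n : ℕ}
    (h₁ : i₁ + n ≤ l₁.length) (h₂ : i₂ + n ≤ l₂.length)
    (h : ∀ j (hj : j < n), l₁[i₁ + j] = l₂[i₂ + j]) :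
    l₁.take i₁ ++ l₂.drop i₂ = l₁.take (i₁ + n) ++ l₂.drop (i₂ + n) := by
  have hrun : (l₁.drop i₁).take n = (l₂.drop i₂).take n :=
    List.ext_getElem (by simp only [List.length_take, List.length_drop]; omega) fun j hj _ => by
      simp only [List.length_take, List.length_drop] at hj
      simpa only [List.getElem_take, List.getElem_drop] using h j (by omega)
  rw [List.take_add, hrun, List.append_assoc, ← List.drop_drop, List.take_append_drop]

/-- two-chunk lossless parallel tokenization: let
`S = S1 ++ So ++ S2`, `A = F (S1 ++ So)` and `B = F (So ++ S2)`.  If there is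
a run of `k + 1` matched tokens `A[i1], …, A[i1+k]` = `B[i2], …, B[i2+k]`
whose global start positions in `S` agree (the start of `A[i1+j]` is the sum
of lengths of the preceding tokens of `A`; the start of `B[i2+j]` is `|S1|`
plus the sum of lengths of the preceding tokens of `B`), and the total length
of the matched run exceeds `T` (the maximal length of a vocabulary word),
then keeping `A` up to the end of the run and `B` after the run reproduces
`F S`. -/
theorem two_chunk_lossless (V : Finset (List α))
    (T : ℕ) (hT : T = V.sup List.length)
    (S S1 So S2 : List α) (hS : S = S1 ++ So ++ S2)
    (A B : List (List α))
    (hA : A = F V (S1 ++ So)) (hB : B = F V (So ++ S2))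
    (i1 i2 k : ℕ)
    (hm : i1 + k < A.length) (hn : i2 + k < B.length)
    (htok : ∀ j, (hj : j ≤ k) →
      A[i1 + j]'(by omega) = B[i2 + j]'(by omega))
    (hpos : ∀ j, j ≤ k →
      ((A.take (i1 + j)).map List.length).sum
        = S1.length + ((B.take (i2 + j)).map List.length).sum)
    (hlong : T < (((A.drop i1).take (k + 1)).map List.length).sum) :
    F V S = A.take (i1 + k + 1) ++ B.drop (i2 + k + 1) := by
  subst hA hB
  have hV : ∀ w ∈ V, w.length ≤ T := fun w hw => hT ▸ Finset.le_sup (f := List.length) hw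
  set q := (((F V (So ++ S2)).take i2).map List.length).sum
  have hstart : (((F V (S1 ++ So)).take i1).map List.length).sum = S1.length + q :=
    hpos 0 (Nat.zero_le k)
  have hrest : F V (So.drop q) = (F V (S1 ++ So)).drop i1 := by
    rw [← F_drop_sum_map_length_take, hstart, List.drop_length_add_append]
  have hlookahead : T < (So.drop q).length :=
    calc T < ((((F V (S1 ++ So)).drop i1).take (k + 1)).map List.length).sum := hlong
      _ ≤ (((F V (S1 ++ So)).drop i1).map List.length).sum :=
        ((List.take_sublist _ _).map _).sum_le_sum fun _ _ => Nat.zero_le _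
      _ = (So.drop q).length := by rw [← hrest, sum_map_length_F]
  rw [List.length_drop] at hlookahead
  have hq : q ≤ So.length := by omega
  have hboundary : (((F V (S1 ++ So)).take i1).map List.length).sum + T ≤ (S1 ++ So).length := by
    rw [hstart, List.length_append]; omega
  calc F V S = (F V (S1 ++ So)).take i1 ++ F V (So.drop q ++ S2) := by
        rw [hS, F_append_eq_take_append V hV i1 _ S2 hboundary, hstart, List.drop_length_add_append]
    _ = (F V (S1 ++ So)).take i1 ++ (F V (So ++ S2)).drop i2 := by
        rw [← List.drop_append_of_le_length hq, F_drop_sum_map_length_take]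
    _ = _ := take_append_drop_eq_of_getElem_eq (n := k + 1) hm hn fun j hj => htok j (by omega)
end
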